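/- Let J ∈ ℕ, T > 0, and let M, S, B : [0,T] → ℝ^{J×J} be continuously differentiable with each M(t) symmetric positive definite and each S(t) symmetric positive semidefinite. Suppose there are constants c₁, c₃, c₄ ≥ 0 such that for all t ∈ [0,T] and all x, y ∈ ℝ^J: |M'(t) x·y| ≤ c₁ (M(t) x·x)^{1/2} (M(t) y·y)^{1/2}, |S'(t) x·x| ≤ c₃ (S(t) x·x), |B(t) x·y| ≤ c₄ (M(t) x·x)^{1/2} (S(t) y·y)^{1/2}, and |B'(t) x·y| ≤ c₄ (M(t) x·x)^{1/2} (S(t) y·y)^{1/2}, where the nonsymmetric term enters the evolution equation through the bilinear map (x,y) ↦ B(t) x·y in its first slot, i.e. α satisfies: for all t ∈ [0,T] and all φ ∈ ℝ^J, (d/dt)(M(t) α(t))·φ + S(t) α(t)·φ + B(t) α(t)·φ = 0, with α : [0,T] → ℝ^J continuously differentiable. Then there is a constant C depending only on c₁, c₃, c₄ and T such that ∫_0^T M(t) α'(t)·α'(t) dt + sup_{t∈[0,T]} S(t) α(t)·α(t) ≤ C (M(0) α(0)·α(0) + S(0) α(0)·α(0)). -/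

import Mathlib

/-!
Energy method. Write `m = Mα·α`, `e = Sα·α`, `g = Mα'·α'`, `p = Bα·α`. Testing the equation with
`α` gives `m' + e ≤ K m`, so Grönwall bounds `m` by `exp (K T) m(0)`, and integrating bounds
`∫ e` by a multiple of `m(0)`. Testing with `α'` and using the symmetry of `S` gives
`e' = S'α·α + 2 Sα·α'`; the term `Bα·α'` cannot be estimated directly, since the bound on `B`
measures its second argument in the `S`-norm, so it is traded for
`p' - B'α·α - Bα'·α`, in which `α'` only appears in the `M`-norm. This yields
`(e + 2p)' + g ≤ a m + b e`; integrating and absorbing the boundary term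
`|p| ≤ c₄² m + e / 4` gives the estimate.
-/

open Matrix Set Real MeasureTheory Topology

namespace Matrix

variable {m n : Type*} [Fintype m] [Fintype n]

theorem IsHermitian.mulVec_dotProduct_comm {A : Matrix n n ℝ} (hA : A.IsHermitian) (x y : n → ℝ) :
    A *ᵥ x ⬝ᵥ y = A *ᵥ y ⬝ᵥ x := by
  rw [dotProduct_comm, dotProduct_mulVec, ← mulVec_transpose,
    ← conjTranspose_eq_transpose_of_trivial, hA.eq]
theorem PosSemidef.mulVec_dotProduct_self_nonneg {A : Matrix n n ℝ} (hA : A.PosSemidef)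
    (x : n → ℝ) : 0 ≤ A *ᵥ x ⬝ᵥ x := by
  simpa [dotProduct_comm] using hA.dotProduct_mulVec_nonneg x

theorem hasDerivWithinAt_mulVec_dotProduct {s : Set ℝ} {t : ℝ} {A : ℝ → Matrix m n ℝ}
    {A' : Matrix m n ℝ} {x : ℝ → n → ℝ} {y : ℝ → m → ℝ} {x' : n → ℝ} {y' : m → ℝ}
    (hA : ∀ i j, HasDerivWithinAt (fun u => A u i j) (A' i j) s t)
    (hx : HasDerivWithinAt x x' s t) (hy : HasDerivWithinAt y y' s t) :
    HasDerivWithinAt (fun u => A u *ᵥ x u ⬝ᵥ y u)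
      (A' *ᵥ x t ⬝ᵥ y t + A t *ᵥ x' ⬝ᵥ y t + A t *ᵥ x t ⬝ᵥ y') s t := by
  have hxi := hasDerivWithinAt_pi.1 hx
  have hyi := hasDerivWithinAt_pi.1 hy
  simp only [mulVec, dotProduct]
  refine (HasDerivWithinAt.fun_sum fun i _ =>
    (HasDerivWithinAt.fun_sum fun j _ => (hA i j).mul (hxi j)).mul (hyi i)).congr_deriv ?_
  simp only [Pi.mul_apply, Finset.sum_add_distrib, add_mul]

theorem continuousOn_mulVec_dotProduct {s : Set ℝ} {A : ℝ → Matrix m n ℝ}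
    {x : ℝ → n → ℝ} {y : ℝ → m → ℝ}
    (hA : ∀ i j, ContinuousOn (fun u => A u i j) s)
    (hx : ContinuousOn x s) (hy : ContinuousOn y s) :
    ContinuousOn (fun u => A u *ᵥ x u ⬝ᵥ y u) s := by
  have hxi := continuousOn_pi.1 hx
  have hyi := continuousOn_pi.1 hy
  simp only [mulVec, dotProduct]
  fun_prop

end Matrix

theorem mul_sqrt_mul_sqrt_le (c : ℝ) {a b : ℝ} (ha : 0 ≤ a) (hb : 0 ≤ b) :
    c * √a * √b ≤ c ^ 2 * a + b / 4 := by
  nlinarith [sq_nonneg (√b / 2 - c * √a), Real.sq_sqrt ha, Real.sq_sqrt hb]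

theorem le_mul_exp_of_hasDerivWithinAt_le_mul {f f' : ℝ → ℝ} {K a b : ℝ}
    (hf : ∀ t ∈ Icc a b, HasDerivWithinAt f (f' t) (Icc a b) t)
    (hbound : ∀ t ∈ Icc a b, f' t ≤ K * f t) :
    ∀ t ∈ Icc a b, f t ≤ f a * exp (K * (t - a)) := by
  intro t ht
  have hslope : ∀ x ∈ Ico a b, ∀ r, f' x < r → ∃ᶠ z in 𝓝[>] x, (z - x)⁻¹ * (f z - f x) < r :=
    fun x hx _ hr => ((hf x (Ico_subset_Icc_self hx)).mono_of_mem_nhdsWithin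
      (Icc_mem_nhdsGE_of_mem hx)).liminf_right_slope_le hr
  have := le_gronwallBound_of_liminf_deriv_right_le (ε := 0)
    (fun x hx => (hf x hx).continuousWithinAt) hslope le_rfl
    (fun x hx => by simpa using hbound x (Ico_subset_Icc_self hx)) t ht
  rwa [gronwallBound_ε0] at this

theorem sub_add_integral_le_integral_of_deriv_add_le {f f' g φ : ℝ → ℝ} {a b : ℝ} (hab : a ≤ b)
    (hf : ∀ x ∈ Icc a b, HasDerivWithinAt f (f' x) (Icc a b) x)
    (hg : IntervalIntegrable g volume a b) (hφ : IntervalIntegrable φ volume a b)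
    (hle : ∀ x ∈ Icc a b, f' x + g x ≤ φ x) :
    f b - f a + ∫ x in a..b, g x ≤ ∫ x in a..b, φ x := by
  have hsub := intervalIntegral.sub_le_integral_of_hasDeriv_right_of_le hab
    (fun x hx => (hf x hx).continuousWithinAt)
    (fun x hx => ((hf x (Ioo_subset_Icc_self hx)).hasDerivAt
      (Icc_mem_nhds hx.1 hx.2)).hasDerivWithinAt)
    ((intervalIntegrable_iff_integrableOn_Icc_of_le hab).1 (hφ.sub hg))
    fun x hx => le_sub_iff_add_le.2 (hle x (Ioo_subset_Icc_self hx))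
  rw [intervalIntegral.integral_sub hφ hg] at hsub
  linarith

section EnergyInequalities

variable {n : Type*} [Fintype n]

theorem mass_deriv_add_stiffness_le {c₁ c₄ : ℝ} {M M' S B : Matrix n n ℝ} {x x' : n → ℝ}
    (hM : M.IsHermitian) (hMx : 0 ≤ M *ᵥ x ⬝ᵥ x) (hSx : 0 ≤ S *ᵥ x ⬝ᵥ x)
    (hM' : |M' *ᵥ x ⬝ᵥ x| ≤ c₁ * √(M *ᵥ x ⬝ᵥ x) * √(M *ᵥ x ⬝ᵥ x))
    (hB : |B *ᵥ x ⬝ᵥ x| ≤ c₄ * √(M *ᵥ x ⬝ᵥ x) * √(S *ᵥ x ⬝ᵥ x))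
    (heq : (M' *ᵥ x + M *ᵥ x') ⬝ᵥ x + S *ᵥ x ⬝ᵥ x + B *ᵥ x ⬝ᵥ x = 0) :
    M' *ᵥ x ⬝ᵥ x + M *ᵥ x' ⬝ᵥ x + M *ᵥ x ⬝ᵥ x' + S *ᵥ x ⬝ᵥ x
      ≤ (c₁ + 2 * c₄ ^ 2) * (M *ᵥ x ⬝ᵥ x) := by
  rw [mul_assoc, Real.mul_self_sqrt hMx] at hM'
  rw [add_dotProduct] at heq
  rw [hM.mulVec_dotProduct_comm x x']
  linarith [abs_le.1 hM', abs_le.1 (hB.trans (mul_sqrt_mul_sqrt_le c₄ hMx hSx))]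

theorem stiffness_deriv_add_le {c₁ c₃ c₄ : ℝ} {M M' S S' B B' : Matrix n n ℝ} {x x' : n → ℝ}
    (hS : S.IsHermitian) (hMx : 0 ≤ M *ᵥ x ⬝ᵥ x) (hSx : 0 ≤ S *ᵥ x ⬝ᵥ x)
    (hMx' : 0 ≤ M *ᵥ x' ⬝ᵥ x')
    (hM' : |M' *ᵥ x ⬝ᵥ x'| ≤ c₁ * √(M *ᵥ x ⬝ᵥ x) * √(M *ᵥ x' ⬝ᵥ x'))
    (hS' : |S' *ᵥ x ⬝ᵥ x| ≤ c₃ * (S *ᵥ x ⬝ᵥ x))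
    (hB : |B *ᵥ x' ⬝ᵥ x| ≤ c₄ * √(M *ᵥ x' ⬝ᵥ x') * √(S *ᵥ x ⬝ᵥ x))
    (hB' : |B' *ᵥ x ⬝ᵥ x| ≤ c₄ * √(M *ᵥ x ⬝ᵥ x) * √(S *ᵥ x ⬝ᵥ x))
    (heq : (M' *ᵥ x + M *ᵥ x') ⬝ᵥ x' + S *ᵥ x ⬝ᵥ x' + B *ᵥ x ⬝ᵥ x' = 0) :
    (S' *ᵥ x ⬝ᵥ x + S *ᵥ x' ⬝ᵥ x + S *ᵥ x ⬝ᵥ x')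
        + 2 * (B' *ᵥ x ⬝ᵥ x + B *ᵥ x' ⬝ᵥ x + B *ᵥ x ⬝ᵥ x') + M *ᵥ x' ⬝ᵥ x'
      ≤ 2 * (c₁ ^ 2 + c₄ ^ 2) * (M *ᵥ x ⬝ᵥ x) + (c₃ + 2 * c₄ ^ 2 + 1 / 2) * (S *ᵥ x ⬝ᵥ x) := by
  rw [add_dotProduct] at heq
  rw [hS.mulVec_dotProduct_comm x' x]
  rw [mul_right_comm] at hB
  linarith [abs_le.1 (hM'.trans (mul_sqrt_mul_sqrt_le c₁ hMx hMx')), abs_le.1 hS',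
    abs_le.1 (hB.trans (mul_sqrt_mul_sqrt_le c₄ hSx hMx')),
    abs_le.1 (hB'.trans (mul_sqrt_mul_sqrt_le c₄ hMx hSx))]

end EnergyInequalities

noncomputable def h1Constant (K a b c T : ℝ) : ℝ :=
  a * T * exp (K * T) + b * (1 + K * T * exp (K * T)) + 2 * c * (exp (K * T) + 1) + 3 / 2

theorem integral_add_half_le_h1Constant {T K a b c : ℝ} (hK : 0 ≤ K) (ha : 0 ≤ a) (hb : 0 ≤ b)
    (hc : 0 ≤ c) {m e g p m' e' p' : ℝ → ℝ}
    (hm : ∀ t ∈ Icc 0 T, HasDerivWithinAt m (m' t) (Icc 0 T) t)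
    (he : ∀ t ∈ Icc 0 T, HasDerivWithinAt e (e' t) (Icc 0 T) t)
    (hp : ∀ t ∈ Icc 0 T, HasDerivWithinAt p (p' t) (Icc 0 T) t)
    (hg : ContinuousOn g (Icc 0 T))
    (hm0 : ∀ t ∈ Icc 0 T, 0 ≤ m t) (he0 : ∀ t ∈ Icc 0 T, 0 ≤ e t)
    (hL2 : ∀ t ∈ Icc 0 T, m' t + e t ≤ K * m t)
    (hH1 : ∀ t ∈ Icc 0 T, e' t + 2 * p' t + g t ≤ a * m t + b * e t)
    (hpe : ∀ t ∈ Icc 0 T, |p t| ≤ c * m t + e t / 4) :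
    ∀ r ∈ Icc 0 T, (∫ t in 0..r, g t) + e r / 2 ≤ h1Constant K a b c T * (m 0 + e 0) := by
  intro r hr
  have hT : 0 ≤ T := hr.1.trans hr.2
  have h0 : (0 : ℝ) ∈ Icc 0 T := ⟨le_rfl, hT⟩
  have hsub : Icc 0 r ⊆ Icc 0 T := Icc_subset_Icc_right hr.2
  have hint : ∀ {f : ℝ → ℝ}, ContinuousOn f (Icc 0 T) → IntervalIntegrable f volume 0 r :=
    fun hf => (hf.mono hsub).intervalIntegrable_of_Icc hr.1
  have hderiv : ∀ {f f' : ℝ → ℝ}, (∀ t ∈ Icc 0 T, HasDerivWithinAt f (f' t) (Icc 0 T) t) →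
      ∀ t ∈ Icc 0 r, HasDerivWithinAt f (f' t) (Icc 0 r) t :=
    fun hf t ht => (hf t (hsub ht)).mono hsub
  have hmc : ContinuousOn m (Icc 0 T) := fun t ht => (hm t ht).continuousWithinAt
  have hec : ContinuousOn e (Icc 0 T) := fun t ht => (he t ht).continuousWithinAt
  set E := exp (K * T)
  have hmE : ∀ t ∈ Icc 0 T, m t ≤ E * m 0 := by
    intro t ht
    calc m t ≤ m 0 * exp (K * (t - 0)) := le_mul_exp_of_hasDerivWithinAt_le_mul hm
          (fun t ht => by linarith [hL2 t ht, he0 t ht]) t ht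
      _ ≤ m 0 * E := mul_le_mul_of_nonneg_left
          (exp_le_exp.2 (mul_le_mul_of_nonneg_left (by linarith [ht.2]) hK)) (hm0 0 h0)
      _ = E * m 0 := mul_comm _ _
  have hIm : ∫ t in 0..r, m t ≤ T * (E * m 0) := by
    calc ∫ t in 0..r, m t ≤ ∫ t in 0..r, E * m 0 :=
          intervalIntegral.integral_mono_on hr.1 (hint hmc) intervalIntegrable_const
            fun t ht => hmE t (hsub ht)
      _ = r * (E * m 0) := by rw [intervalIntegral.integral_const, smul_eq_mul, sub_zero]
      _ ≤ T * (E * m 0) := by gcongr; exacts [(hm0 0 h0).trans (hmE 0 h0), hr.2]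
  have hIe : m r - m 0 + ∫ t in 0..r, e t ≤ K * ∫ t in 0..r, m t := by
    rw [← intervalIntegral.integral_const_mul]
    exact sub_add_integral_le_integral_of_deriv_add_le hr.1 (hderiv hm) (hint hec)
      ((hint hmc).const_mul K) fun t ht => hL2 t (hsub ht)
  have hIg : e r + 2 * p r - (e 0 + 2 * p 0) + ∫ t in 0..r, g t
      ≤ a * (∫ t in 0..r, m t) + b * ∫ t in 0..r, e t := by
    rw [← intervalIntegral.integral_const_mul, ← intervalIntegral.integral_const_mul,
      ← intervalIntegral.integral_add ((hint hmc).const_mul a) ((hint hec).const_mul b)]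
    exact sub_add_integral_le_integral_of_deriv_add_le hr.1
      (hderiv fun t ht => (he t ht).add ((hp t ht).const_mul 2)) (hint hg)
      (((hint hmc).const_mul a).add ((hint hec).const_mul b)) fun t ht => hH1 t (hsub ht)
  have hIe' : ∫ t in 0..r, e t ≤ (1 + K * T * E) * m 0 := by
    linarith [mul_le_mul_of_nonneg_left hIm hK, hm0 r hr]
  have hpr := abs_le.1 (hpe r hr)
  have hp0 := abs_le.1 (hpe 0 h0)
  unfold h1Constant
  linarith [mul_le_mul_of_nonneg_left hIm ha, mul_le_mul_of_nonneg_left hIe' hb,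
    mul_le_mul_of_nonneg_left (hmE r hr) hc, hm0 0 h0,
    mul_nonneg (by positivity : 0 ≤ a * T * E + b * (1 + K * T * E) + 2 * c * (E + 1)) (he0 0 h0)]

theorem semidiscrete_H1_stability_general
    (c₁ c₃ c₄ T : ℝ) (hc₁ : 0 ≤ c₁) (hc₃ : 0 ≤ c₃) (hT : 0 < T) :
    ∃ C : ℝ, 0 ≤ C ∧
      ∀ (J : ℕ) (M M' S S' B B' : ℝ → Matrix (Fin J) (Fin J) ℝ),
        (∀ t ∈ Set.Icc (0 : ℝ) T, ∀ i j : Fin J,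
          HasDerivWithinAt (fun s => M s i j) (M' t i j) (Set.Icc (0 : ℝ) T) t) →
        (∀ i j : Fin J, ContinuousOn (fun s => M' s i j) (Set.Icc (0 : ℝ) T)) →
        (∀ t ∈ Set.Icc (0 : ℝ) T, ∀ i j : Fin J,
          HasDerivWithinAt (fun s => S s i j) (S' t i j) (Set.Icc (0 : ℝ) T) t) →
        (∀ i j : Fin J, ContinuousOn (fun s => S' s i j) (Set.Icc (0 : ℝ) T)) →
        (∀ t ∈ Set.Icc (0 : ℝ) T, ∀ i j : Fin J,
          HasDerivWithinAt (fun s => B s i j) (B' t i j) (Set.Icc (0 : ℝ) T) t) →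
        (∀ i j : Fin J, ContinuousOn (fun s => B' s i j) (Set.Icc (0 : ℝ) T)) →
        (∀ t ∈ Set.Icc (0 : ℝ) T, (M t).PosDef) →
        (∀ t ∈ Set.Icc (0 : ℝ) T, (S t).PosSemidef) →
        (∀ t ∈ Set.Icc (0 : ℝ) T, ∀ x y : Fin J → ℝ,
          |(M' t).mulVec x ⬝ᵥ y|
            ≤ c₁ * Real.sqrt ((M t).mulVec x ⬝ᵥ x) * Real.sqrt ((M t).mulVec y ⬝ᵥ y)) →
        (∀ t ∈ Set.Icc (0 : ℝ) T, ∀ x : Fin J → ℝ,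
          |(S' t).mulVec x ⬝ᵥ x| ≤ c₃ * ((S t).mulVec x ⬝ᵥ x)) →
        (∀ t ∈ Set.Icc (0 : ℝ) T, ∀ x y : Fin J → ℝ,
          |(B t).mulVec x ⬝ᵥ y|
            ≤ c₄ * Real.sqrt ((M t).mulVec x ⬝ᵥ x) * Real.sqrt ((S t).mulVec y ⬝ᵥ y)) →
        (∀ t ∈ Set.Icc (0 : ℝ) T, ∀ x y : Fin J → ℝ,
          |(B' t).mulVec x ⬝ᵥ y|
            ≤ c₄ * Real.sqrt ((M t).mulVec x ⬝ᵥ x) * Real.sqrt ((S t).mulVec y ⬝ᵥ y)) →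
        ∀ (α α' : ℝ → Fin J → ℝ),
          (∀ t ∈ Set.Icc (0 : ℝ) T,
            HasDerivWithinAt α (α' t) (Set.Icc (0 : ℝ) T) t) →
          ContinuousOn α' (Set.Icc (0 : ℝ) T) →
          (∀ t ∈ Set.Icc (0 : ℝ) T, ∀ φ : Fin J → ℝ,
            ((M' t).mulVec (α t) + (M t).mulVec (α' t)) ⬝ᵥ φ
              + (S t).mulVec (α t) ⬝ᵥ φ + (B t).mulVec (α t) ⬝ᵥ φ = 0) →
          ∀ t ∈ Set.Icc (0 : ℝ) T,
            (∫ s in (0 : ℝ)..T, (M s).mulVec (α' s) ⬝ᵥ α' s)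
                + (S t).mulVec (α t) ⬝ᵥ α t
              ≤ C * ((M 0).mulVec (α 0) ⬝ᵥ α 0 + (S 0).mulVec (α 0) ⬝ᵥ α 0) := by
  refine ⟨3 * h1Constant (c₁ + 2 * c₄ ^ 2) (2 * (c₁ ^ 2 + c₄ ^ 2)) (c₃ + 2 * c₄ ^ 2 + 1 / 2)
    (c₄ ^ 2) T, by unfold h1Constant; positivity, ?_⟩
  intro J M M' S S' B B' hM _ hS _ hB _ hMpd hSpsd hbM hbS hbB hbB' α α' hα hα'c heq
  have hm : ∀ t ∈ Icc 0 T, ∀ x, 0 ≤ M t *ᵥ x ⬝ᵥ x := fun t ht =>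
    (hMpd t ht).posSemidef.mulVec_dotProduct_self_nonneg
  have he : ∀ t ∈ Icc 0 T, ∀ x, 0 ≤ S t *ᵥ x ⬝ᵥ x := fun t ht =>
    (hSpsd t ht).mulVec_dotProduct_self_nonneg
  have key := integral_add_half_le_h1Constant (by positivity) (by positivity) (by positivity)
    (by positivity)
    (fun t ht => hasDerivWithinAt_mulVec_dotProduct (hM t ht) (hα t ht) (hα t ht))
    (fun t ht => hasDerivWithinAt_mulVec_dotProduct (hS t ht) (hα t ht) (hα t ht))
    (fun t ht => hasDerivWithinAt_mulVec_dotProduct (hB t ht) (hα t ht) (hα t ht))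
    (continuousOn_mulVec_dotProduct (fun i j t ht => (hM t ht i j).continuousWithinAt) hα'c hα'c)
    (fun t ht => hm t ht _) (fun t ht => he t ht _)
    (fun t ht => mass_deriv_add_stiffness_le (hMpd t ht).1 (hm t ht _) (he t ht _)
      (hbM t ht _ _) (hbB t ht _ _) (heq t ht _))
    (fun t ht => stiffness_deriv_add_le (hSpsd t ht).1 (hm t ht _) (he t ht _) (hm t ht _)
      (hbM t ht _ _) (hbS t ht _) (hbB t ht _ _) (hbB' t ht _ _) (heq t ht _))
    (fun t ht => (hbB t ht _ _).trans (mul_sqrt_mul_sqrt_le _ (hm t ht _) (he t ht _)))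
  intro t ht
  have hT' : T ∈ Icc 0 T := right_mem_Icc.2 hT.le
  have hg : 0 ≤ ∫ s in 0..t, M s *ᵥ α' s ⬝ᵥ α' s :=
    intervalIntegral.integral_nonneg ht.1 fun s hs => hm s ⟨hs.1, hs.2.trans ht.2⟩ _
  linarith [key T hT', key t ht, he T hT' (α T)]

/-- Material-derivative (H¹) stability bound for the semidiscrete ALE-ESFEM
scheme in matrix–vector form: there is a constant `C` depending only on
`c₁, c₃, c₄` and `T` such that for any C¹ families `M, S, B` of matrices
(`M(t)` symmetric positive definite, `S(t)` symmetric positive semidefinite)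
satisfying the transport bounds on `M', S', B, B'`, and any C¹ solution `α` of
`(d/dt)(M α)·φ + S α·φ + B α·φ = 0` for all `φ`, one has
`∫₀ᵀ M α'·α' + sup_{t∈[0,T]} S(t)α(t)·α(t) ≤ C (M(0)α(0)·α(0) + S(0)α(0)·α(0))`. -/
theorem semidiscrete_H1_stability
    (c₁ c₃ c₄ T : ℝ) (hc₁ : 0 ≤ c₁) (hc₃ : 0 ≤ c₃) (hc₄ : 0 ≤ c₄) (hT : 0 < T) :
    ∃ C : ℝ, 0 ≤ C ∧
      ∀ (J : ℕ) (M M' S S' B B' : ℝ → Matrix (Fin J) (Fin J) ℝ),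
        (∀ t ∈ Set.Icc (0 : ℝ) T, ∀ i j : Fin J,
          HasDerivWithinAt (fun s => M s i j) (M' t i j) (Set.Icc (0 : ℝ) T) t) →
        (∀ i j : Fin J, ContinuousOn (fun s => M' s i j) (Set.Icc (0 : ℝ) T)) →
        (∀ t ∈ Set.Icc (0 : ℝ) T, ∀ i j : Fin J,
          HasDerivWithinAt (fun s => S s i j) (S' t i j) (Set.Icc (0 : ℝ) T) t) →
        (∀ i j : Fin J, ContinuousOn (fun s => S' s i j) (Set.Icc (0 : ℝ) T)) →
        (∀ t ∈ Set.Icc (0 : ℝ) T, ∀ i j : Fin J,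
          HasDerivWithinAt (fun s => B s i j) (B' t i j) (Set.Icc (0 : ℝ) T) t) →
        (∀ i j : Fin J, ContinuousOn (fun s => B' s i j) (Set.Icc (0 : ℝ) T)) →
        (∀ t ∈ Set.Icc (0 : ℝ) T, (M t).PosDef) →
        (∀ t ∈ Set.Icc (0 : ℝ) T, (S t).PosSemidef) →
        (∀ t ∈ Set.Icc (0 : ℝ) T, ∀ x y : Fin J → ℝ,
          |(M' t).mulVec x ⬝ᵥ y|
            ≤ c₁ * Real.sqrt ((M t).mulVec x ⬝ᵥ x) * Real.sqrt ((M t).mulVec y ⬝ᵥ y)) →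
        (∀ t ∈ Set.Icc (0 : ℝ) T, ∀ x : Fin J → ℝ,
          |(S' t).mulVec x ⬝ᵥ x| ≤ c₃ * ((S t).mulVec x ⬝ᵥ x)) →
        (∀ t ∈ Set.Icc (0 : ℝ) T, ∀ x y : Fin J → ℝ,
          |(B t).mulVec x ⬝ᵥ y|
            ≤ c₄ * Real.sqrt ((M t).mulVec x ⬝ᵥ x) * Real.sqrt ((S t).mulVec y ⬝ᵥ y)) →
        (∀ t ∈ Set.Icc (0 : ℝ) T, ∀ x y : Fin J → ℝ,
          |(B' t).mulVec x ⬝ᵥ y|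
            ≤ c₄ * Real.sqrt ((M t).mulVec x ⬝ᵥ x) * Real.sqrt ((S t).mulVec y ⬝ᵥ y)) →
        ∀ (α α' : ℝ → Fin J → ℝ),
          (∀ t ∈ Set.Icc (0 : ℝ) T,
            HasDerivWithinAt α (α' t) (Set.Icc (0 : ℝ) T) t) →
          ContinuousOn α' (Set.Icc (0 : ℝ) T) →
          (∀ t ∈ Set.Icc (0 : ℝ) T, ∀ φ : Fin J → ℝ,
            ((M' t).mulVec (α t) + (M t).mulVec (α' t)) ⬝ᵥ φ
              + (S t).mulVec (α t) ⬝ᵥ φ + (B t).mulVec (α t) ⬝ᵥ φ = 0) →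
          ∀ t ∈ Set.Icc (0 : ℝ) T,
            (∫ s in (0 : ℝ)..T, (M s).mulVec (α' s) ⬝ᵥ α' s)
                + (S t).mulVec (α t) ⬝ᵥ α t
              ≤ C * ((M 0).mulVec (α 0) ⬝ᵥ α 0 + (S 0).mulVec (α 0) ⬝ᵥ α 0) :=
  semidiscrete_H1_stability_general c₁ c₃ c₄ T hc₁ hc₃ hT
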